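/- arXiv:1207.2740 — 2 statements merged into one kernel-verified Lean document; each statement's English description precedes it below -/
import Mathlib

section
/- Under the same setup, for any parameter values θ, ζ, the contrast function H(X(n); ζ) evaluated on a sample generated under θ converges almost surely to N(θ,ζ) = ∬_S [T_θ([a,b]) − T_ζ([a,b])]² W(a,b) da db as n → ∞. -/
/-!
For a fixed interval `p = [a,b]`, `T̂(p; X(n))` is the empirical frequency of the i.i.d. events
"`X_i` meets `p`", so by the strong law it tends to `T_θ(p)` almost surely. Fubini turns
"for every `p`, almost surely" into "almost surely, for almost every `p`", and since the integrand
of `H` is bounded by `C` on the finite-measure set `S`, dominated convergence gives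
`H(X(n); ζ) → N(θ, ζ)`.
-/

open scoped Classical

open MeasureTheory ProbabilityTheory Filter Topology Finset

def hitSet : Set ((ℝ × ℝ) × (ℝ × ℝ)) :=
  {r | (Set.Icc r.1.1 r.1.2 ∩ Set.Icc r.2.1 r.2.2).Nonempty}

lemma mk_mem_hitSet {p x : ℝ × ℝ} :
    (p, x) ∈ hitSet ↔ (Set.Icc p.1 p.2 ∩ Set.Icc x.1 x.2).Nonempty :=
  Iff.rfl

lemma measurableSet_hitSet : MeasurableSet hitSet := by
  have : hitSet = {r | max r.1.1 r.2.1 ≤ min r.1.2 r.2.2} := by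
    ext r
    simp only [hitSet, Set.mem_ofPred_eq, Set.Icc_inter_Icc, Set.nonempty_Icc]
  rw [this]
  exact measurableSet_le (by fun_prop) (by fun_prop)

lemma sum_ite_one_zero_div_mem_Icc (q : ℕ → Prop) (n : ℕ) :
    (∑ i ∈ range n, if q i then (1 : ℝ) else 0) / n ∈ Set.Icc (0 : ℝ) 1 := by
  rw [Finset.sum_boole]
  refine ⟨by positivity, div_le_one_of_le₀ ?_ n.cast_nonneg⟩
  exact_mod_cast (card_filter_le _ _).trans (card_range n).le

section Measurability

variable {Ω α E : Type*} [MeasurableSpace Ω] [MeasurableSpace α] [MeasurableSpace E]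
  {A : Set (α × E)}

lemma measurable_sum_ite_mem_div {X : ℕ → Ω → E} (hX : ∀ i, Measurable (X i))
    (hA : MeasurableSet A) (n : ℕ) :
    Measurable fun q : Ω × α =>
      (∑ i ∈ range n, if (q.2, X i q.1) ∈ A then (1 : ℝ) else 0) / n := by
  refine Measurable.div_const (Finset.measurable_sum _ fun i _ => ?_) _
  exact Measurable.ite ((measurable_snd.prodMk ((hX i).comp measurable_fst)) hA)
    measurable_const measurable_const

lemma measurable_sum_ite_mem_div_section {X : ℕ → Ω → E} (hX : ∀ i, Measurable (X i))
    (hA : MeasurableSet A) (n : ℕ) (ω : Ω) :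
    Measurable fun p : α => (∑ i ∈ range n, if (p, X i ω) ∈ A then (1 : ℝ) else 0) / n :=
  (measurable_sum_ite_mem_div hX hA n).comp measurable_prodMk_left

lemma measurable_toReal_measure_mem {P : Measure Ω} [SFinite P] {X : Ω → E}
    (hX : Measurable X) (hA : MeasurableSet A) :
    Measurable fun p : α => (P {ω | (p, X ω) ∈ A}).toReal :=
  (measurable_measure_prodMk_left (ν := P) ((measurable_id.prodMap hX) hA)).ennreal_toReal

end Measurability

lemma ae_tendsto_sum_ite_mem_div {Ω E : Type*} [MeasurableSpace Ω] [MeasurableSpace E]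
    {P : Measure Ω} [IsProbabilityMeasure P] {X : ℕ → Ω → E} (hX : Measurable (X 0))
    (hindep : Pairwise fun i j => IndepFun (X i) (X j) P)
    (hident : ∀ i, IdentDistrib (X i) (X 0) P P) {A : Set E} (hA : MeasurableSet A) :
    ∀ᵐ ω ∂P, Tendsto (fun n : ℕ => (∑ i ∈ range n, if X i ω ∈ A then (1 : ℝ) else 0) / n)
      atTop (𝓝 (P (X 0 ⁻¹' A)).toReal) := by
  have hf : Measurable (A.indicator (1 : E → ℝ)) := measurable_one.indicator hA
  have hint : Integrable (A.indicator (1 : E → ℝ) ∘ X 0) P := by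
    refine (integrable_const (1 : ℝ)).mono' (hf.comp hX).aestronglyMeasurable ?_
    filter_upwards with ω
    simp only [Function.comp_apply, Set.indicator_apply, Pi.one_apply]
    split_ifs <;> norm_num
  have hmean : ∫ ω, (A.indicator (1 : E → ℝ) ∘ X 0) ω ∂P = (P (X 0 ⁻¹' A)).toReal := by
    change ∫ ω, (X 0 ⁻¹' A).indicator 1 ω ∂P = _
    rw [integral_indicator_one (hX hA), measureReal_def]
  have hlaw := strong_law_ae_real (fun i => A.indicator (1 : E → ℝ) ∘ X i) hint
    (fun i j hij => (hindep hij).comp hf hf) (fun i => (hident i).comp hf)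
  simp only [Function.comp_apply, Set.indicator_apply, Pi.one_apply] at hmean hlaw
  rwa [hmean] at hlaw

lemma tendsto_integral_sq_sub_mul {α : Type*} [MeasurableSpace α] {ν : Measure α}
    [IsFiniteMeasure ν] {u : ℕ → α → ℝ} {g v W : α → ℝ} {C : ℝ}
    (hu : ∀ n, Measurable (u n)) (hu01 : ∀ n p, u n p ∈ Set.Icc (0 : ℝ) 1)
    (hv : Measurable v) (hv01 : ∀ p, v p ∈ Set.Icc (0 : ℝ) 1)
    (hW : Measurable W) (hWC : ∀ p, 0 ≤ W p ∧ W p ≤ C)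
    (hlim : ∀ᵐ p ∂ν, Tendsto (fun n => u n p) atTop (𝓝 (g p))) :
    Tendsto (fun n => ∫ p, (v p - u n p) ^ 2 * W p ∂ν) atTop
      (𝓝 (∫ p, (v p - g p) ^ 2 * W p ∂ν)) := by
  refine tendsto_integral_of_dominated_convergence (fun _ => C)
    (fun n => (((hv.sub (hu n)).pow_const 2).mul hW).aestronglyMeasurable)
    (integrable_const C) (fun n => ae_of_all _ fun p => ?_) ?_
  · obtain ⟨hv0, hv1⟩ := hv01 p
    obtain ⟨hu0, hu1⟩ := hu01 n p
    obtain ⟨hW0, hWle⟩ := hWC p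
    have hsq : (v p - u n p) ^ 2 ≤ 1 := by nlinarith
    rw [Real.norm_of_nonneg (by positivity)]
    nlinarith
  · filter_upwards [hlim] with p hp
    exact ((tendsto_const_nhds.sub hp).pow 2).mul tendsto_const_nhds

theorem stmt11_general {Ω : Type*} [MeasureSpace Ω] (P : Measure Ω) [IsProbabilityMeasure P]
    (Z : ℕ → Ω → ℝ × ℝ) (hmeas : ∀ i, Measurable (Z i))
    (hindep : Pairwise fun i j => IndepFun (Z i) (Z j) P)
    (hident : ∀ i, IdentDistrib (Z i) (Z 0) P P)
    (S : Set (ℝ × ℝ)) (hSfin : volume S < ⊤)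
    (W : ℝ × ℝ → ℝ) (hWmeas : Measurable W) (C : ℝ)
    (hW : ∀ p, 0 < W p ∧ W p < C)
    (Tθ : ℝ × ℝ → ℝ)
    (hTθ : Tθ = fun p =>
      (P {ω | (Set.Icc p.1 p.2 ∩ Set.Icc (Z 0 ω).1 (Z 0 ω).2).Nonempty}).toReal)
    (Tζ : ℝ × ℝ → ℝ) (hTζmeas : Measurable Tζ) (hTζrange : ∀ p, Tζ p ∈ Set.Icc (0:ℝ) 1)
    (That : ℕ → Ω → ℝ × ℝ → ℝ)
    (hThat : That = fun n ω p =>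
      (∑ i ∈ Finset.range n,
        (if (Set.Icc p.1 p.2 ∩ Set.Icc (Z i ω).1 (Z i ω).2).Nonempty
          then (1 : ℝ) else 0)) / n) :
    ∀ᵐ ω ∂P, Tendsto
      (fun n : ℕ => ∫ p in S, (Tζ p - That n ω p) ^ 2 * W p)
      atTop (nhds (∫ p in S, (Tθ p - Tζ p) ^ 2 * W p)) := by
  subst hTθ hThat
  have : IsFiniteMeasure (volume.restrict S) := isFiniteMeasure_restrict.2 hSfin.ne
  have hThat_meas := measurable_sum_ite_mem_div (α := ℝ × ℝ) hmeas measurableSet_hitSet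
  have hTθ_meas := measurable_toReal_measure_mem (α := ℝ × ℝ) (P := P) (hmeas 0)
    measurableSet_hitSet
  have hpointwise : ∀ p : ℝ × ℝ, ∀ᵐ ω ∂P, Tendsto (fun n : ℕ =>
      (∑ i ∈ range n, if (p, Z i ω) ∈ hitSet then (1 : ℝ) else 0) / n)
      atTop (𝓝 (P {ω | (p, Z 0 ω) ∈ hitSet}).toReal) := fun p =>
    ae_tendsto_sum_ite_mem_div (A := Prod.mk p ⁻¹' hitSet) (hmeas 0) hindep hident
      (measurable_prodMk_left measurableSet_hitSet)
  have hswap : ∀ᵐ ω ∂P, ∀ᵐ p ∂volume.restrict S, Tendsto (fun n : ℕ =>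
      (∑ i ∈ range n, if (p, Z i ω) ∈ hitSet then (1 : ℝ) else 0) / n)
      atTop (𝓝 (P {ω | (p, Z 0 ω) ∈ hitSet}).toReal) := by
    rw [Measure.ae_ae_comm (measurableSet_tendsto_fun hThat_meas (hTθ_meas.comp measurable_snd))]
    exact ae_of_all _ hpointwise
  filter_upwards [hswap] with ω hω
  simp_rw [← mk_mem_hitSet, sub_sq_comm _ (Tζ _)]
  exact tendsto_integral_sq_sub_mul
    (measurable_sum_ite_mem_div_section hmeas measurableSet_hitSet · ω)
    (fun n p => sum_ite_one_zero_div_mem_Icc _ n) hTζmeas hTζrange hWmeas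
    (fun p => ⟨(hW p).1.le, (hW p).2.le⟩) hω

/-- Under data generated by parameter `θ` (i.i.d. intervals with hitting
function `T`), the contrast function at another parameter `ζ`,
`H(X(n); ζ) = ∬_S [T_ζ([a,b]) − T̂([a,b];X(n))]² W(a,b) da db`,
converges almost surely to `N(θ,ζ) = ∬_S [T_θ − T_ζ]² W`. -/
theorem stmt11 {Ω : Type*} [MeasureSpace Ω] (P : Measure Ω) [IsProbabilityMeasure P]
    (Z : ℕ → Ω → ℝ × ℝ) (hmeas : ∀ i, Measurable (Z i))
    (hle : ∀ i ω, (Z i ω).1 ≤ (Z i ω).2)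
    (hindep : Pairwise fun i j => IndepFun (Z i) (Z j) P)
    (hident : ∀ i, IdentDistrib (Z i) (Z 0) P P)
    (S : Set (ℝ × ℝ)) (hS : MeasurableSet S) (hSfin : volume S < ⊤)
    (W : ℝ × ℝ → ℝ) (hWmeas : Measurable W) (C : ℝ)
    (hW : ∀ p, 0 < W p ∧ W p < C)
    (Tθ : ℝ × ℝ → ℝ)
    (hTθ : Tθ = fun p =>
      (P {ω | (Set.Icc p.1 p.2 ∩ Set.Icc (Z 0 ω).1 (Z 0 ω).2).Nonempty}).toReal)
    (Tζ : ℝ × ℝ → ℝ) (hTζmeas : Measurable Tζ) (hTζrange : ∀ p, Tζ p ∈ Set.Icc (0:ℝ) 1)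
    (That : ℕ → Ω → ℝ × ℝ → ℝ)
    (hThat : That = fun n ω p =>
      (∑ i ∈ Finset.range n,
        (if (Set.Icc p.1 p.2 ∩ Set.Icc (Z i ω).1 (Z i ω).2).Nonempty
          then (1 : ℝ) else 0)) / n) :
    ∀ᵐ ω ∂P, Tendsto
      (fun n : ℕ => ∫ p in S, (Tζ p - That n ω p) ^ 2 * W p)
      atTop (nhds (∫ p in S, (Tθ p - Tζ p) ^ 2 * W p)) :=
  stmt11_general P Z hmeas hindep hident S hSfin W hWmeas C hW Tθ hTθ Tζ hTζmeas hTζrange That hThat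
end

section
/- Let Θ ⊂ ℝ^p be compact with θ_0 an interior point, and let M(X(n); θ) be a family of contrast functions: for all θ, ζ ∈ Θ, M(X(n); ζ) → N(θ, ζ) almost surely under P_θ, and N(θ,θ) < N(θ,ζ) for ζ ≠ θ. Suppose additionally that for almost every sample path, the functions θ ↦ M(X(n); θ), n = 1, 2, …, are equicontinuous. Then any sequence of minimum contrast estimators θ̂_n (measurable minimizers of M(X(n); ·) over Θ) converges to θ_0 almost surely. -/
/-!
Fix a countable dense subset `D` of `Θ`. Almost surely the paths `M(X(n); ·)` are equicontinuous
and converge to `N` on `D`. One such sample that also converges at a given `ζ` shows that `N`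
restricted to `D` tends to `N ζ` at `ζ`; equicontinuity then forces convergence to `N ζ` at `ζ` on
every such sample, so almost surely `M(X(n); ·) → N` on all of `Θ`. On such a sample, equicontinuity
at a cluster point `ζ` of the minimisers lets `M(X(n); θ̂ₙ)` be compared with `M(X(n); ζ)`, giving
`N ζ ≤ N θ₀`, hence `ζ = θ₀`; compactness of `Θ` turns this into convergence.
-/

open MeasureTheory Filter Topology Uniformity TopologicalSpace

section Equicontinuity

variable {ι X α : Type*} [TopologicalSpace X] [UniformSpace α] {F : ι → X → α}

theorem EquicontinuousWithinAt.tendsto_of_mem_closure {l : Filter ι} {f : X → α} {S s : Set X}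
    {x : X} {z : α} (hF : EquicontinuousWithinAt F S x) (hsS : s ⊆ S)
    (hf : Tendsto f (𝓝[s] x) (𝓝 z)) (hs : ∀ y ∈ s, Tendsto (F · y) l (𝓝 (f y)))
    (hx : x ∈ closure s) : Tendsto (F · x) l (𝓝 z) := by
  rw [(nhds_basis_uniformity (𝓤 α).basis_sets).tendsto_right_iff] at hf ⊢
  intro U hU
  obtain ⟨V, hV, _, hVU⟩ := comp_comp_symm_mem_uniformity_sets hU
  have := mem_closure_iff_nhdsWithin_neBot.1 hx
  obtain ⟨y, hys, hFy, hfy⟩ : ∃ y ∈ s, (∀ i, (F i x, F i y) ∈ V) ∧ (f y, z) ∈ V :=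
    (eventually_mem_nhdsWithin.and <|
      ((hF V hV).filter_mono (nhdsWithin_mono x hsS)).and (hf V hV)).exists
  filter_upwards [hs y hys (UniformSpace.ball_mem_nhds _ hV)] with i hi
  exact hVU (SetRel.prodMk_mem_comp (SetRel.prodMk_mem_comp (hFy i) (SetRel.symm V hi)) hfy)

theorem EquicontinuousWithinAt.tendsto_apply {u : Filter ι} {S : Set X} {x₀ : X} {x : ι → X}
    {z : α} (hF : EquicontinuousWithinAt F S x₀) (hx : Tendsto x u (𝓝[S] x₀))
    (hz : Tendsto (F · x₀) u (𝓝 z)) : Tendsto (fun i ↦ F i (x i)) u (𝓝 z) :=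
  hz.congr_uniformity fun U hU ↦ (hx.eventually (hF U hU)).mono fun i hi ↦ hi i

theorem tendsto_of_isMinOn_of_equicontinuousOn [Preorder α] [OrderClosedTopology α]
    {l : Filter ι} {f : X → α} {K : Set X} {x : ι → X} {x₀ : X} (hK : IsCompact K)
    (hequi : EquicontinuousOn F K) (hconv : ∀ y ∈ K, Tendsto (F · y) l (𝓝 (f y)))
    (hx₀ : x₀ ∈ K) (hf : ∀ y ∈ K, y ≠ x₀ → f x₀ < f y) (hxK : ∀ i, x i ∈ K)
    (hxmin : ∀ i, IsMinOn (F i) K (x i)) : Tendsto x l (𝓝 x₀) := by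
  refine hK.tendsto_nhds_of_unique_mapClusterPt (.of_forall hxK) fun ζ hζ hcluster ↦ ?_
  obtain ⟨U, hUl, hxU⟩ := mapClusterPt_iff_ultrafilter.1 hcluster
  have hlim : f ζ ≤ f x₀ :=
    le_of_tendsto_of_tendsto
      ((hequi ζ hζ).tendsto_apply (tendsto_nhdsWithin_iff.2 ⟨hxU, .of_forall hxK⟩)
        ((hconv ζ hζ).mono_left hUl))
      ((hconv x₀ hx₀).mono_left hUl) (.of_forall fun i ↦ isMinOn_iff.1 (hxmin i) x₀ hx₀)
  by_contra hne
  exact (hf ζ hζ hne).not_ge hlim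

end Equicontinuity

theorem ae_forall_tendsto_of_equicontinuousOn {Ω ι X α : Type*} [MeasurableSpace Ω]
    {μ : Measure Ω} [NeZero μ] [TopologicalSpace X] [PseudoMetrizableSpace X] [UniformSpace α]
    {l : Filter ι} [l.NeBot] {F : ι → Ω → X → α} {f : X → α} {K : Set X} (hK : IsSeparable K)
    (hconv : ∀ x ∈ K, ∀ᵐ ω ∂μ, Tendsto (F · ω x) l (𝓝 (f x)))
    (hequi : ∀ᵐ ω ∂μ, EquicontinuousOn (fun i ↦ F i ω) K) :
    ∀ᵐ ω ∂μ, ∀ x ∈ K, Tendsto (F · ω x) l (𝓝 (f x)) := by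
  obtain ⟨D, hDK, hD, hKD⟩ := hK.exists_countable_dense_subset
  have hconvD : ∀ᵐ ω ∂μ, ∀ y ∈ D, Tendsto (F · ω y) l (𝓝 (f y)) :=
    (ae_ball_iff hD).2 fun y hy ↦ hconv y (hDK hy)
  have hfD : ∀ x ∈ K, Tendsto f (𝓝[D] x) (𝓝 (f x)) := by
    intro x hx
    obtain ⟨ω, hω, hωD, hωx⟩ := (hequi.and (hconvD.and (hconv x hx))).exists
    exact Tendsto.continuousWithinAt_of_equicontinuousWithinAt hωD hωx ((hω x hx).mono hDK)
  filter_upwards [hequi, hconvD] with ω hω hωD x hx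
  exact (hω x hx).tendsto_of_mem_closure hDK (hfD x hx) hωD (hKD hx)

theorem stmt13_general {Ω : Type*} [MeasureSpace Ω] (P : Measure Ω) [IsProbabilityMeasure P]
    (p : ℕ) (Θ : Set (Fin p → ℝ)) (hΘ : IsCompact Θ)
    (θ0 : Fin p → ℝ) (hθ0 : θ0 ∈ interior Θ)
    (M : ℕ → Ω → (Fin p → ℝ) → ℝ) (N : (Fin p → ℝ) → ℝ)
    (hconv : ∀ ζ ∈ Θ, ∀ᵐ ω ∂P, Tendsto (fun n => M n ω ζ) atTop (nhds (N ζ)))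
    (hmin : ∀ ζ ∈ Θ, ζ ≠ θ0 → N θ0 < N ζ)
    (hequi : ∀ᵐ ω ∂P, EquicontinuousOn (fun n => M n ω) Θ)
    (θhat : ℕ → Ω → (Fin p → ℝ))
    (hmem : ∀ n ω, θhat n ω ∈ Θ)
    (hargmin : ∀ n ω, ∀ θ ∈ Θ, M n ω (θhat n ω) ≤ M n ω θ) :
    ∀ᵐ ω ∂P, Tendsto (fun n => θhat n ω) atTop (nhds θ0) := by
  have hpaths := ae_forall_tendsto_of_equicontinuousOn hΘ.isSeparable hconv hequi
  filter_upwards [hequi, hpaths] with ω hωequi hωconv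
  exact tendsto_of_isMinOn_of_equicontinuousOn hΘ hωequi hωconv (interior_subset hθ0) hmin
    (hmem · ω) fun n ↦ isMinOn_iff.2 (hargmin n ω)

/-- Strong consistency of the minimum contrast estimator: if `M(X(n);·)` is a
family of contrast functions (a.s. converging pointwise to `N(θ₀,·)`, which has
a strict unique minimum at `θ₀`), `Θ` is compact with `θ₀` an interior point,
and the sample paths `θ ↦ M(X(n);θ)` are a.s. equicontinuous, then any sequence
of minimum contrast estimators converges to `θ₀` almost surely. -/
theorem stmt13 {Ω : Type*} [MeasureSpace Ω] (P : Measure Ω) [IsProbabilityMeasure P]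
    (p : ℕ) (Θ : Set (Fin p → ℝ)) (hΘ : IsCompact Θ)
    (θ0 : Fin p → ℝ) (hθ0 : θ0 ∈ interior Θ)
    (M : ℕ → Ω → (Fin p → ℝ) → ℝ) (N : (Fin p → ℝ) → ℝ)
    (hMmeas : ∀ n θ, Measurable (fun ω => M n ω θ))
    (hconv : ∀ ζ ∈ Θ, ∀ᵐ ω ∂P, Tendsto (fun n => M n ω ζ) atTop (nhds (N ζ)))
    (hmin : ∀ ζ ∈ Θ, ζ ≠ θ0 → N θ0 < N ζ)
    (hequi : ∀ᵐ ω ∂P, EquicontinuousOn (fun n => M n ω) Θ)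
    (θhat : ℕ → Ω → (Fin p → ℝ))
    (hθhatmeas : ∀ n, Measurable (θhat n))
    (hmem : ∀ n ω, θhat n ω ∈ Θ)
    (hargmin : ∀ n ω, ∀ θ ∈ Θ, M n ω (θhat n ω) ≤ M n ω θ) :
    ∀ᵐ ω ∂P, Tendsto (fun n => θhat n ω) atTop (nhds θ0) :=
  stmt13_general P p Θ hΘ θ0 hθ0 M N hconv hmin hequi θhat hmem hargmin
end
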